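/- For any countable ordinal α, the union of a strongly functionally discrete family of sets each of the α'th functionally additive class in a topological space X is again of the α'th functionally additive class; the same holds for the functionally multiplicative classes. -/

import Mathlib

open Set Topology Ordinal

/-- A family of sets is discrete if every point has an open neighborhood
meeting at most one member of the family. -/
def DiscreteFam {X I : Type*} [TopologicalSpace X] (U : I → Set X) : Prop :=
  ∀ x : X, ∃ V : Set X, IsOpen V ∧ x ∈ V ∧
    ∀ i j : I, (V ∩ U i).Nonempty → (V ∩ U j).Nonempty → i = j

/-- A set is functionally closed (a zero set) if it is the preimage of `{0}`
under a continuous real-valued function. -/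
def FunClosed {X : Type*} [TopologicalSpace X] (F : Set X) : Prop :=
  ∃ f : X → ℝ, Continuous f ∧ F = f ⁻¹' {0}

/-- A set is functionally open if its complement is functionally closed. -/
def FunOpen {X : Type*} [TopologicalSpace X] (U : Set X) : Prop :=
  FunClosed Uᶜ

/-- The pair (α'th functionally multiplicative class, α'th functionally additive class),
defined by transfinite recursion. -/
noncomputable def FunClassPair (X : Type*) [TopologicalSpace X] (α : Ordinal) :
    Set (Set X) × Set (Set X) :=
  if α = 0 then ({F | FunClosed F}, {U | FunOpen U})
  else
    ({ A | ∃ f : ℕ → Set X, (∀ n, ∃ β, ∃ _ : β < α, f n ∈ (FunClassPair X β).2) ∧ A = ⋂ n, f n },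
     { A | ∃ f : ℕ → Set X, (∀ n, ∃ β, ∃ _ : β < α, f n ∈ (FunClassPair X β).1) ∧ A = ⋃ n, f n })
termination_by α

/-- The α'th functionally multiplicative class. -/
noncomputable def FunMul (X : Type*) [TopologicalSpace X] (α : Ordinal) : Set (Set X) :=
  (FunClassPair X α).1

/-- The α'th functionally additive class. -/
noncomputable def FunAdd (X : Type*) [TopologicalSpace X] (α : Ordinal) : Set (Set X) :=
  (FunClassPair X α).2

/-- Functionally ambiguous sets of class α. -/
noncomputable def FunAmb {X : Type*} [TopologicalSpace X] (α : Ordinal) (A : Set X) : Prop :=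
  A ∈ FunAdd X α ∧ A ∈ FunMul X α

/-- A family is strongly functionally discrete (sfd). -/
def SFDFam {X I : Type*} [TopologicalSpace X] (A : I → Set X) : Prop :=
  ∃ U : I → Set X, DiscreteFam U ∧ (∀ i, FunOpen (U i)) ∧ ∀ i, closure (A i) ⊆ U i

/-- A collection of sets is sfd (viewed as a family indexed by itself). -/
def SFDSet {X : Type*} [TopologicalSpace X] (𝒜 : Set (Set X)) : Prop :=
  SFDFam (fun b : 𝒜 => (b : Set X))

/-- A collection of sets is a well sfd-family. -/
def WellSFDSet {X : Type*} [TopologicalSpace X] (𝒜 : Set (Set X)) : Prop :=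
  ∃ U F : 𝒜 → Set X, DiscreteFam U ∧ DiscreteFam F ∧
    (∀ b, FunOpen (U b)) ∧ (∀ b, FunClosed (F b)) ∧
    ∀ b : 𝒜, (b : Set X) ⊆ F b ∧ F b ⊆ U b

/-- An indexed family is σ-sfd if the index set splits into countably many pieces
on each of which the family is sfd. -/
def SigmaSFDFam {X I : Type*} [TopologicalSpace X] (A : I → Set X) : Prop :=
  ∃ J : ℕ → Set I, (∀ n, SFDFam (fun i : J n => A i)) ∧ (⋃ n, J n) = Set.univ

/-- `B` is a base for the mapping `f`: every preimage of an open set is a union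
of members of `B`. -/
def IsBaseFor {X Y : Type*} [TopologicalSpace X] [TopologicalSpace Y]
    (B : Set (Set X)) (f : X → Y) : Prop :=
  ∀ V : Set Y, IsOpen V → ∃ S ⊆ B, f ⁻¹' V = ⋃₀ S

/-- `f` has a σ-strongly-functionally-discrete base. -/
def SigmaSFD {X Y : Type*} [TopologicalSpace X] [TopologicalSpace Y] (f : X → Y) : Prop :=
  ∃ B : ℕ → Set (Set X), (∀ n, SFDSet (B n)) ∧ IsBaseFor (⋃ n, B n) f

/-- `f` has a σ-sfd base consisting of functionally ambiguous sets of class α. -/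
noncomputable def SigmaSFDAmb {X Y : Type*} [TopologicalSpace X] [TopologicalSpace Y]
    (α : Ordinal) (f : X → Y) : Prop :=
  ∃ B : ℕ → Set (Set X), (∀ n, SFDSet (B n)) ∧ (∀ n, ∀ b ∈ B n, FunAmb α b) ∧
    IsBaseFor (⋃ n, B n) f

/-- `f` belongs to the α'th functionally Lebesgue class. -/
noncomputable def LebClass {X Y : Type*} [TopologicalSpace X] [TopologicalSpace Y]
    (α : Ordinal) (f : X → Y) : Prop :=
  ∀ V : Set Y, IsOpen V → f ⁻¹' V ∈ FunAdd X α

/-- `Y` has a σ-disjoint base. -/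
def SigmaDisjointBase (Y : Type*) [TopologicalSpace Y] : Prop :=
  ∃ V : ℕ → Set (Set Y), (∀ m, (V m).PairwiseDisjoint id) ∧
    TopologicalSpace.IsTopologicalBasis (⋃ m, V m)

/-!
Induction on `α`, for families `B i ⊆ U i` subordinate to a fixed discrete family `U` of
functionally open sets. For `α = 0` one sums continuous functions supported in the `U i`: the
sum is locally finite, and at each point at most one summand is nonzero. For `α > 0` each `B i`
is a countable union (intersection) of sets `A i n` of classes `β i n < α`. Since `α` is
countable, grouping, for every pair `(n, γ)` with `γ < α`, the pieces `A i n` with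
`β i n ≤ γ` into one discrete family of class `γ` writes `⋃ i, B i` as a countable union
(intersection) of sets of lower classes, which are handled by induction. In the
multiplicative case the pieces are first cut down to `U i`, to stay subordinate to `U`.
-/

section FunctionallyOpenClosed

variable {X : Type*} [TopologicalSpace X]

open Function

lemma funOpen_support {g : X → ℝ} (hg : Continuous g) : FunOpen (support g) :=
  ⟨g, hg, by rw [compl_support]; rfl⟩

lemma FunOpen.exists_support_nonneg {U : Set X} (hU : FunOpen U) :
    ∃ g : X → ℝ, Continuous g ∧ 0 ≤ g ∧ support g = U := by
  obtain ⟨f, hf, hU⟩ := hU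
  refine ⟨fun x => |f x|, hf.abs, fun x => abs_nonneg _, ?_⟩
  rw [← compl_compl U, hU]
  ext x
  simp

lemma funClosed_iff_funOpen_compl {F : Set X} : FunClosed F ↔ FunOpen Fᶜ := by
  rw [FunOpen, compl_compl]

lemma FunClosed.exists_nonneg {F : Set X} (hF : FunClosed F) :
    ∃ f : X → ℝ, Continuous f ∧ 0 ≤ f ∧ F = f ⁻¹' {0} := by
  obtain ⟨f, hf, hf0, hsupp⟩ := (funClosed_iff_funOpen_compl.1 hF).exists_support_nonneg
  refine ⟨f, hf, hf0, ?_⟩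
  rw [← compl_compl F, ← hsupp, compl_support]
  rfl

lemma funClosed_empty : FunClosed (∅ : Set X) :=
  ⟨fun _ => 1, continuous_const, by simp⟩

lemma funClosed_setOf_le {g : X → ℝ} (hg : Continuous g) (ε : ℝ) :
    FunClosed {x | ε ≤ g x} :=
  ⟨fun x => max (ε - g x) 0, by fun_prop, by ext x; simp⟩

lemma FunClosed.inter {A B : Set X} (hA : FunClosed A) (hB : FunClosed B) :
    FunClosed (A ∩ B) := by
  obtain ⟨f, hf, hf0, rfl⟩ := hA.exists_nonneg
  obtain ⟨g, hg, hg0, rfl⟩ := hB.exists_nonneg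
  refine ⟨f + g, hf.add hg, ?_⟩
  ext x
  simp [add_eq_zero_iff_of_nonneg (hf0 x) (hg0 x)]

lemma FunOpen.inter {U V : Set X} (hU : FunOpen U) (hV : FunOpen V) : FunOpen (U ∩ V) := by
  obtain ⟨f, hf, -, rfl⟩ := hU.exists_support_nonneg
  obtain ⟨g, hg, -, rfl⟩ := hV.exists_support_nonneg
  rw [← support_mul]
  exact funOpen_support (hf.mul hg)

lemma FunOpen.eq_iUnion_funClosed {U : Set X} (hU : FunOpen U) :
    ∃ Z : ℕ → Set X, (∀ n, FunClosed (Z n)) ∧ U = ⋃ n, Z n := by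
  obtain ⟨g, hg, hg0, rfl⟩ := hU.exists_support_nonneg
  refine ⟨fun n => {x | 1 / ((n : ℝ) + 1) ≤ g x}, fun n => funClosed_setOf_le hg _, ?_⟩
  ext x
  simp only [mem_support, Set.mem_iUnion]
  constructor
  · intro hx
    obtain ⟨n, hn⟩ := exists_nat_one_div_lt ((hg0 x).lt_of_ne' hx)
    exact ⟨n, hn.le⟩
  · rintro ⟨n, hn⟩
    exact (lt_of_lt_of_le (by positivity) hn).ne'

lemma FunClosed.eq_iInter_funOpen {F : Set X} (hF : FunClosed F) :
    ∃ W : ℕ → Set X, (∀ n, FunOpen (W n)) ∧ F = ⋂ n, W n := by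
  obtain ⟨Z, hZ, hFZ⟩ := (funClosed_iff_funOpen_compl.1 hF).eq_iUnion_funClosed
  refine ⟨fun n => (Z n)ᶜ, fun n => funClosed_iff_funOpen_compl.1 (hZ n), ?_⟩
  rw [← Set.compl_iUnion, ← hFZ, compl_compl]

end FunctionallyOpenClosed

section FunctionalClasses

variable {X : Type*} [TopologicalSpace X]

lemma mem_funMul_zero {A : Set X} : A ∈ FunMul X 0 ↔ FunClosed A := by
  rw [FunMul, FunClassPair]; simp

lemma mem_funAdd_zero {A : Set X} : A ∈ FunAdd X 0 ↔ FunOpen A := by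
  rw [FunAdd, FunClassPair]; simp

lemma mem_funMul_iff {α : Ordinal} (hα : α ≠ 0) {A : Set X} :
    A ∈ FunMul X α ↔ ∃ f : ℕ → Set X, (∀ n, ∃ β < α, f n ∈ FunAdd X β) ∧ A = ⋂ n, f n := by
  rw [FunMul, FunClassPair, if_neg hα]
  simp only [Set.mem_ofPred_eq, exists_prop]
  rfl

lemma mem_funAdd_iff {α : Ordinal} (hα : α ≠ 0) {A : Set X} :
    A ∈ FunAdd X α ↔ ∃ f : ℕ → Set X, (∀ n, ∃ β < α, f n ∈ FunMul X β) ∧ A = ⋃ n, f n := by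
  rw [FunAdd, FunClassPair, if_neg hα]
  simp only [Set.mem_ofPred_eq, exists_prop]
  rfl

lemma iInter_mem_funMul {ι : Sort*} [Countable ι] [Nonempty ι] {α : Ordinal} (hα : α ≠ 0)
    {f : ι → Set X} (hf : ∀ j, ∃ β < α, f j ∈ FunAdd X β) : ⋂ j, f j ∈ FunMul X α := by
  obtain ⟨s, hs⟩ := exists_surjective_nat ι
  exact (mem_funMul_iff hα).2 ⟨f ∘ s, fun n => hf (s n), (hs.iInter_comp f).symm⟩

lemma iUnion_mem_funAdd {ι : Sort*} [Countable ι] [Nonempty ι] {α : Ordinal} (hα : α ≠ 0)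
    {f : ι → Set X} (hf : ∀ j, ∃ β < α, f j ∈ FunMul X β) : ⋃ j, f j ∈ FunAdd X α := by
  obtain ⟨s, hs⟩ := exists_surjective_nat ι
  exact (mem_funAdd_iff hα).2 ⟨f ∘ s, fun n => hf (s n), (hs.iUnion_comp f).symm⟩

lemma funMul_mono : Monotone (FunMul X) := by
  intro β α hβα A hA
  rcases hβα.eq_or_lt with rfl | hlt
  · exact hA
  obtain rfl | hβ := eq_or_ne β 0
  · obtain ⟨W, hW, rfl⟩ := (mem_funMul_zero.1 hA).eq_iInter_funOpen
    exact iInter_mem_funMul hlt.ne_bot fun n => ⟨0, hlt, mem_funAdd_zero.2 (hW n)⟩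
  · obtain ⟨f, hf, rfl⟩ := (mem_funMul_iff hβ).1 hA
    exact iInter_mem_funMul hlt.ne_bot fun n =>
      let ⟨γ, hγ, hfn⟩ := hf n; ⟨γ, hγ.trans hlt, hfn⟩

lemma funAdd_mono : Monotone (FunAdd X) := by
  intro β α hβα A hA
  rcases hβα.eq_or_lt with rfl | hlt
  · exact hA
  obtain rfl | hβ := eq_or_ne β 0
  · obtain ⟨Z, hZ, rfl⟩ := (mem_funAdd_zero.1 hA).eq_iUnion_funClosed
    exact iUnion_mem_funAdd hlt.ne_bot fun n => ⟨0, hlt, mem_funMul_zero.2 (hZ n)⟩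
  · obtain ⟨f, hf, rfl⟩ := (mem_funAdd_iff hβ).1 hA
    exact iUnion_mem_funAdd hlt.ne_bot fun n =>
      let ⟨γ, hγ, hfn⟩ := hf n; ⟨γ, hγ.trans hlt, hfn⟩

lemma FunClosed.mem_funMul {F : Set X} (hF : FunClosed F) (α : Ordinal) : F ∈ FunMul X α :=
  funMul_mono (zero_le (a := α)) (mem_funMul_zero.2 hF)

lemma FunOpen.mem_funAdd {U : Set X} (hU : FunOpen U) (α : Ordinal) : U ∈ FunAdd X α :=
  funAdd_mono (zero_le (a := α)) (mem_funAdd_zero.2 hU)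

lemma inter_mem_funMul {α : Ordinal} {A B : Set X} (hA : A ∈ FunMul X α)
    (hB : B ∈ FunMul X α) : A ∩ B ∈ FunMul X α := by
  obtain rfl | hα := eq_or_ne α 0
  · exact mem_funMul_zero.2 ((mem_funMul_zero.1 hA).inter (mem_funMul_zero.1 hB))
  obtain ⟨f, hf, rfl⟩ := (mem_funMul_iff hα).1 hA
  obtain ⟨g, hg, rfl⟩ := (mem_funMul_iff hα).1 hB
  convert iInter_mem_funMul hα (f := Sum.elim f g) (Sum.rec hf hg) using 1
  rw [Set.iInter_sum]
  rfl

lemma inter_mem_funAdd {α : Ordinal} {A B : Set X} (hA : A ∈ FunAdd X α)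
    (hB : B ∈ FunAdd X α) : A ∩ B ∈ FunAdd X α := by
  obtain rfl | hα := eq_or_ne α 0
  · exact mem_funAdd_zero.2 ((mem_funAdd_zero.1 hA).inter (mem_funAdd_zero.1 hB))
  obtain ⟨f, hf, rfl⟩ := (mem_funAdd_iff hα).1 hA
  obtain ⟨g, hg, rfl⟩ := (mem_funAdd_iff hα).1 hB
  rw [Set.iUnion_inter_iUnion, ← Set.iUnion_prod' (fun p : ℕ × ℕ => f p.1 ∩ g p.2)]
  refine iUnion_mem_funAdd hα fun p => ?_
  obtain ⟨β, hβ, hfβ⟩ := hf p.1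
  obtain ⟨γ, hγ, hgγ⟩ := hg p.2
  exact ⟨max β γ, max_lt hβ hγ,
    inter_mem_funMul (funMul_mono (le_max_left β γ) hfβ) (funMul_mono (le_max_right β γ) hgγ)⟩

end FunctionalClasses

section DiscreteFamilies

variable {X I : Type*} [TopologicalSpace X] {U : I → Set X}

open Function

lemma DiscreteFam.eq_of_mem (hU : DiscreteFam U) {x : X} {i j : I} (hi : x ∈ U i)
    (hj : x ∈ U j) : i = j := by
  obtain ⟨V, -, hxV, hV⟩ := hU x
  exact hV i j ⟨x, hxV, hi⟩ ⟨x, hxV, hj⟩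

lemma DiscreteFam.locallyFinite (hU : DiscreteFam U) : LocallyFinite U := by
  intro x
  obtain ⟨V, hVo, hxV, hV⟩ := hU x
  exact ⟨V, hVo.mem_nhds hxV, Set.Subsingleton.finite fun i hi j hj =>
    hV i j (Set.inter_comm _ _ ▸ hi) (Set.inter_comm _ _ ▸ hj)⟩

variable {M : Type*} [AddCommMonoid M] {φ : I → X → M}

lemma DiscreteFam.continuous_finsum [TopologicalSpace M] [ContinuousAdd M]
    (hU : DiscreteFam U) (hφ : ∀ i, Continuous (φ i)) (hsupp : ∀ i, support (φ i) ⊆ U i) :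
    Continuous fun x => ∑ᶠ i, φ i x :=
  _root_.continuous_finsum hφ (hU.locallyFinite.subset hsupp)

lemma DiscreteFam.preimage_finsum (hU : DiscreteFam U) (hsupp : ∀ i, support (φ i) ⊆ U i)
    {S : Set M} (hS : 0 ∉ S) : (fun x => ∑ᶠ i, φ i x) ⁻¹' S = ⋃ i, φ i ⁻¹' S := by
  ext x
  have hzero : ∀ j, x ∉ U j → φ j x = 0 := fun j hj => notMem_support.1 fun h => hj (hsupp j h)
  simp only [Set.mem_preimage, Set.mem_iUnion]
  by_cases hx : ∃ i, x ∈ U i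
  · obtain ⟨i, hi⟩ := hx
    rw [finsum_eq_single _ i fun j hj => hzero j fun hxj => hj (hU.eq_of_mem hxj hi)]
    refine ⟨fun h => ⟨i, h⟩, fun ⟨j, hj⟩ => ?_⟩
    have hxj : x ∈ U j := hsupp j fun h0 => hS (h0 ▸ hj)
    rwa [hU.eq_of_mem hxj hi] at hj
  · simp only [not_exists] at hx
    simp only [hzero _ (hx _), finsum_zero]
    exact ⟨fun h => absurd h hS, fun ⟨_, h⟩ => absurd h hS⟩

lemma DiscreteFam.funOpen_iUnion (hU : DiscreteFam U) {B : I → Set X} (hBU : ∀ i, B i ⊆ U i)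
    (hB : ∀ i, FunOpen (B i)) : FunOpen (⋃ i, B i) := by
  choose g hg _ hgB using fun i => (hB i).exists_support_nonneg
  have hsupp : ∀ i, support (g i) ⊆ U i := fun i => hgB i ▸ hBU i
  have hunion : ⋃ i, B i = support fun x => ∑ᶠ i, g i x := by
    simp only [← hgB, support_eq_preimage]
    exact (hU.preimage_finsum hsupp (Set.notMem_compl_iff.2 (Set.mem_singleton 0))).symm
  rw [hunion]
  exact funOpen_support (hU.continuous_finsum hg hsupp)

lemma DiscreteFam.funClosed_iUnion (hU : DiscreteFam U) (hUo : ∀ i, FunOpen (U i))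
    {B : I → Set X} (hBU : ∀ i, B i ⊆ U i) (hB : ∀ i, FunClosed (B i)) :
    FunClosed (⋃ i, B i) := by
  choose f hf hf0 hfB using fun i => (hB i).exists_nonneg
  choose g hg hg0 hgU using fun i => (hUo i).exists_support_nonneg
  have hden : ∀ i x, f i x + g i x ≠ 0 := by
    intro i x h
    obtain ⟨hfx, hgx⟩ := (add_eq_zero_iff_of_nonneg (hf0 i x) (hg0 i x)).1 h
    have hxU : x ∈ U i := hBU i (by rw [hfB i]; exact hfx)
    exact (hgU i ▸ hxU : x ∈ support (g i)) hgx
  -- a continuous function equal to `1` exactly on `B i` and vanishing off `U i`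
  set ψ : I → X → ℝ := fun i x => g i x / (f i x + g i x)
  have hψB : ∀ i, ψ i ⁻¹' {1} = B i := by
    intro i
    ext x
    simp [ψ, div_eq_one_iff_eq (hden i x), hfB i]
  have hψU : ∀ i, support (ψ i) ⊆ U i := by
    intro i x hx
    rw [← hgU i]
    exact (div_ne_zero_iff.1 hx).1
  have hψ : ∀ i, Continuous (ψ i) := fun i => (hg i).div ((hf i).add (hg i)) (hden i)
  refine ⟨fun x => ∑ᶠ i, ψ i x - 1, (hU.continuous_finsum hψ hψU).sub continuous_const, ?_⟩
  simp only [← hψB, ← hU.preimage_finsum hψU (by norm_num : (0 : ℝ) ∉ ({1} : Set ℝ))]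
  ext x
  simp [sub_eq_zero]

end DiscreteFamilies

lemma Ordinal.countable_Iio_of_lt_omega_one {α : Ordinal} (hα : α < ω₁) :
    (Set.Iio α).Countable := by
  rw [← Cardinal.le_aleph0_iff_set_countable, Cardinal.mk_Iio_ordinal, Cardinal.lift_le_aleph0,
    ← Cardinal.lt_aleph_one_iff, ← Cardinal.lt_ord, Cardinal.ord_aleph]
  exact hα

section DiscreteUnions

variable {X I : Type*} [TopologicalSpace X] {U : I → Set X}

lemma iUnion_mem_funAdd_of_forall_lt {α : Ordinal} (hα : α < ω₁) (hα0 : α ≠ 0)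
    (ih : ∀ β < α, ∀ B : I → Set X, (∀ i, B i ⊆ U i) → (∀ i, B i ∈ FunMul X β) →
      ⋃ i, B i ∈ FunMul X β)
    {B : I → Set X} (hBU : ∀ i, B i ⊆ U i) (hB : ∀ i, B i ∈ FunAdd X α) :
    ⋃ i, B i ∈ FunAdd X α := by
  choose A hA hBA using fun i => (mem_funAdd_iff hα0).1 (hB i)
  choose β hβ hAβ using hA
  obtain rfl : B = fun i => ⋃ n, A i n := funext hBA
  have : Countable (Set.Iio α) := (Ordinal.countable_Iio_of_lt_omega_one hα).to_subtype
  have : Nonempty (Set.Iio α) := ⟨⟨0, pos_iff_ne_zero.2 hα0⟩⟩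
  let G : ℕ × Set.Iio α → I → Set X := fun p i => if β i p.1 ≤ p.2 then A i p.1 else ∅
  have hGU : ∀ p i, G p i ⊆ U i := by
    intro p i
    by_cases h : β i p.1 ≤ p.2
    · simpa [G, h] using (Set.subset_iUnion _ _).trans (hBU i)
    · simp [G, h]
  have hunion : ⋃ i, ⋃ n, A i n = ⋃ p, ⋃ i, G p i := by
    ext x
    simp only [Set.mem_iUnion]
    constructor
    · rintro ⟨i, n, hx⟩
      exact ⟨(n, ⟨β i n, hβ i n⟩), i, by simpa [G] using hx⟩
    · rintro ⟨p, i, hx⟩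
      by_cases h : β i p.1 ≤ p.2
      · exact ⟨i, p.1, by simpa [G, h] using hx⟩
      · simp [G, h] at hx
  rw [hunion]
  refine iUnion_mem_funAdd hα0 fun p => ⟨p.2, p.2.2, ih p.2 p.2.2 (G p) (hGU p) fun i => ?_⟩
  by_cases h : β i p.1 ≤ p.2
  · simpa [G, h] using funMul_mono h (hAβ i p.1)
  · simpa [G, h] using funClosed_empty.mem_funMul (p.2 : Ordinal)

lemma DiscreteFam.iUnion_mem_funMul_of_forall_lt (hU : DiscreteFam U) (hUo : ∀ i, FunOpen (U i))
    {α : Ordinal} (hα : α < ω₁) (hα0 : α ≠ 0)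
    (ih : ∀ β < α, ∀ B : I → Set X, (∀ i, B i ⊆ U i) → (∀ i, B i ∈ FunAdd X β) →
      ⋃ i, B i ∈ FunAdd X β)
    {B : I → Set X} (hBU : ∀ i, B i ⊆ U i) (hB : ∀ i, B i ∈ FunMul X α) :
    ⋃ i, B i ∈ FunMul X α := by
  choose A hA hBA using fun i => (mem_funMul_iff hα0).1 (hB i)
  choose β hβ hAβ using hA
  obtain rfl : B = fun i => ⋂ n, A i n := funext hBA
  have : Countable (Set.Iio α) := (Ordinal.countable_Iio_of_lt_omega_one hα).to_subtype
  have : Nonempty (Set.Iio α) := ⟨⟨0, pos_iff_ne_zero.2 hα0⟩⟩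
  let G : ℕ × Set.Iio α → I → Set X := fun p i => if β i p.1 ≤ p.2 then A i p.1 ∩ U i else U i
  have hGU : ∀ p i, G p i ⊆ U i := by
    intro p i
    by_cases h : β i p.1 ≤ p.2 <;> simp [G, h]
  have hinter : ⋃ i, ⋂ n, A i n = ⋂ p, ⋃ i, G p i := by
    ext x
    simp only [Set.mem_iUnion, Set.mem_iInter]
    constructor
    · rintro ⟨i, hx⟩ p
      have hxU : x ∈ U i := hBU i (Set.mem_iInter.2 hx)
      refine ⟨i, ?_⟩
      by_cases h : β i p.1 ≤ p.2
      · simpa [G, h] using ⟨hx p.1, hxU⟩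
      · simpa [G, h] using hxU
    · intro hx
      obtain ⟨i, hi⟩ := hx (Classical.arbitrary _)
      refine ⟨i, fun n => ?_⟩
      obtain ⟨j, hj⟩ := hx (n, ⟨β i n, hβ i n⟩)
      obtain rfl := hU.eq_of_mem (hGU _ j hj) (hGU _ i hi)
      simp only [G, le_refl, if_true] at hj
      exact hj.1
  rw [hinter]
  refine _root_.iInter_mem_funMul hα0 fun p => ⟨p.2, p.2.2, ih p.2 p.2.2 (G p) (hGU p) fun i => ?_⟩
  by_cases h : β i p.1 ≤ p.2
  · simpa [G, h] using inter_mem_funAdd (funAdd_mono h (hAβ i p.1)) ((hUo i).mem_funAdd _)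
  · simpa [G, h] using (hUo i).mem_funAdd (p.2 : Ordinal)

theorem DiscreteFam.iUnion_mem_funAdd_and_funMul (hU : DiscreteFam U)
    (hUo : ∀ i, FunOpen (U i)) {α : Ordinal} (hα : α < ω₁) (B : I → Set X)
    (hBU : ∀ i, B i ⊆ U i) :
    ((∀ i, B i ∈ FunAdd X α) → (⋃ i, B i) ∈ FunAdd X α) ∧
    ((∀ i, B i ∈ FunMul X α) → (⋃ i, B i) ∈ FunMul X α) := by
  induction α using WellFoundedLT.induction generalizing B with
  | _ α ih =>
  obtain rfl | hα0 := eq_or_ne α 0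
  · exact ⟨fun hB => mem_funAdd_zero.2 (hU.funOpen_iUnion hBU fun i => mem_funAdd_zero.1 (hB i)),
      fun hB => mem_funMul_zero.2 (hU.funClosed_iUnion hUo hBU fun i => mem_funMul_zero.1 (hB i))⟩
  · exact ⟨iUnion_mem_funAdd_of_forall_lt hα hα0 (fun β hβ B hBU => (ih β hβ (hβ.trans hα) B hBU).2) hBU,
      hU.iUnion_mem_funMul_of_forall_lt hUo hα hα0 (fun β hβ B hBU => (ih β hβ (hβ.trans hα) B hBU).1) hBU⟩

end DiscreteUnions

theorem stmt3 {X I : Type*} [TopologicalSpace X] (α : Ordinal) (hα : α < ω₁)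
    (B : I → Set X) (hsfd : SFDFam B) :
    ((∀ i, B i ∈ FunAdd X α) → (⋃ i, B i) ∈ FunAdd X α) ∧
    ((∀ i, B i ∈ FunMul X α) → (⋃ i, B i) ∈ FunMul X α) := by
  obtain ⟨U, hU, hUo, hBU⟩ := hsfd
  exact hU.iUnion_mem_funAdd_and_funMul hUo hα B fun i => subset_closure.trans (hBU i)
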